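/- Let n ≥ 1, let π be a permutation of {1,…,n}, let ψ ∈ {1,…,n}, and let γ be a natural number; write β(i) for the γ-th bit (0-indexed) of the binary representation of i. In the graph WP(π, ψ, γ): if β(π(ψ)) = 1, then dist(v_{π(ψ),3}, t_8) = 14, and hence the diameter of WP(π, ψ, γ) is at least 14; if β(π(ψ)) = 0, then every two vertices of WP(π, ψ, γ) are at distance at most 13. -/

import Mathlib

/-- Vertices of the `Windmill-Perm` construction: the tail `t 0, …, t 7`
(representing `t_1, …, t_8`; `u_{i,1} = t_1 = t 0` for every `i`), and for each
`i ∈ {1, …, n}` (encoded as `Fin n`) the vertices `u i j` (for `j : Fin 3`,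
representing `u_{i,2}, u_{i,3}, u_{i,4}`) and `v i j` (for `j : Fin 4`,
representing `v_{i,1}, …, v_{i,4}`). -/
inductive WPVert (n : ℕ) : Type
  | t : Fin 8 → WPVert n
  | u : Fin n → Fin 3 → WPVert n
  | v : Fin n → Fin 4 → WPVert n

/-- `β i` is the `γ`-th bit of the binary representation of index `i`
(the element `i : Fin n` encodes the index `i + 1 ∈ {1, …, n}`). -/
def wpBit {n : ℕ} (γ : ℕ) (i : Fin n) : Bool := Nat.testBit ((i : ℕ) + 1) γ

/-- Edges of `WP(π, ψ, γ)`: the tail path `t j ~ t (j+1)`; `u_{i,1} ~ u_{i,2}`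
always, `u_{i,2} ~ u_{i,3}` iff `i = ψ`, `u_{i,1} ~ u_{i,3}` iff `i ≠ ψ`;
`u_{i,3} ~ u_{i,4}`; `v_{i,1} ~ v_{i,2}` always, `v_{i,2} ~ v_{i,3}` iff
`β i = 1`, `v_{i,1} ~ v_{i,3}` iff `β i = 0`; `v_{i,4} ~ v_{i,1}`; and
`u_{i,4} ~ v_{π(i),4}`; no other edges. -/
def wpRel {n : ℕ} (π : Equiv.Perm (Fin n)) (ψ : Fin n) (γ : ℕ) :
    WPVert n → WPVert n → Prop
  | .t j, .t k => (k : ℕ) = (j : ℕ) + 1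
  | .t j, .u i l => j = 0 ∧ (l = 0 ∨ (l = 1 ∧ i ≠ ψ))
  | .u i j, .u k l => i = k ∧ ((j = 0 ∧ l = 1 ∧ i = ψ) ∨ (j = 1 ∧ l = 2))
  | .v i j, .v k l => i = k ∧
      ((j = 0 ∧ l = 1) ∨
       (j = 1 ∧ l = 2 ∧ wpBit γ i = true) ∨
       (j = 0 ∧ l = 2 ∧ wpBit γ i = false) ∨
       (j = 3 ∧ l = 0))
  | .u i j, .v k l => j = 2 ∧ l = 3 ∧ k = π i
  | _, _ => False

/-- The `Windmill-Perm` graph. -/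
def WPGraph {n : ℕ} (π : Equiv.Perm (Fin n)) (ψ : Fin n) (γ : ℕ) :
    SimpleGraph (WPVert n) :=
  SimpleGraph.fromRel (wpRel π ψ γ)

namespace WPAux

open WPVert SimpleGraph

variable {n : ℕ} (π : Equiv.Perm (Fin n)) (ψ : Fin n) (γ : ℕ)

lemma mkAdj {x y : WPVert n} (hne : x ≠ y) (h : wpRel π ψ γ x y) :
    (WPGraph π ψ γ).Adj x y :=
  (SimpleGraph.fromRel_adj _ _ _).mpr ⟨hne, Or.inl h⟩

lemma adj_t {j k : Fin 8} (h : (k : ℕ) = (j : ℕ) + 1) :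
    (WPGraph π ψ γ).Adj (t j) (t k) :=
  mkAdj π ψ γ (by simp [Fin.ext_iff]; omega) h

lemma adj_t_u0 (i : Fin n) : (WPGraph π ψ γ).Adj (t 0) (u i 0) :=
  mkAdj π ψ γ (by simp) ⟨rfl, Or.inl rfl⟩

lemma adj_t_u1 {i : Fin n} (h : i ≠ ψ) : (WPGraph π ψ γ).Adj (t 0) (u i 1) :=
  mkAdj π ψ γ (by simp) ⟨rfl, Or.inr ⟨rfl, h⟩⟩

lemma adj_u01 : (WPGraph π ψ γ).Adj (u ψ 0) (u ψ 1) :=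
  mkAdj π ψ γ (by simp) ⟨rfl, Or.inl ⟨rfl, rfl, rfl⟩⟩

lemma adj_u12 (i : Fin n) : (WPGraph π ψ γ).Adj (u i 1) (u i 2) :=
  mkAdj π ψ γ (by simp) ⟨rfl, Or.inr ⟨rfl, rfl⟩⟩

lemma adj_u_v (i : Fin n) : (WPGraph π ψ γ).Adj (u i 2) (v (π i) 3) :=
  mkAdj π ψ γ (by simp) ⟨rfl, rfl, rfl⟩

lemma adj_v01 (i : Fin n) : (WPGraph π ψ γ).Adj (v i 0) (v i 1) :=
  mkAdj π ψ γ (by simp) ⟨rfl, Or.inl ⟨rfl, rfl⟩⟩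

lemma adj_v12 {i : Fin n} (h : wpBit γ i = true) :
    (WPGraph π ψ γ).Adj (v i 1) (v i 2) :=
  mkAdj π ψ γ (by simp) ⟨rfl, Or.inr (Or.inl ⟨rfl, rfl, h⟩)⟩

lemma adj_v02 {i : Fin n} (h : wpBit γ i = false) :
    (WPGraph π ψ γ).Adj (v i 0) (v i 2) :=
  mkAdj π ψ γ (by simp) ⟨rfl, Or.inr (Or.inr (Or.inl ⟨rfl, rfl, h⟩))⟩

lemma adj_v30 (i : Fin n) : (WPGraph π ψ γ).Adj (v i 3) (v i 0) :=
  mkAdj π ψ γ (by simp) ⟨rfl, Or.inr (Or.inr (Or.inr ⟨rfl, rfl⟩))⟩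


lemma exists_walk_t (a d : ℕ) : ∀ (h : a + d < 8),
    ∃ p : (WPGraph π ψ γ).Walk (t ⟨a, by omega⟩) (t ⟨a + d, h⟩), p.length = d := by
  induction d with
  | zero => exact fun h => ⟨SimpleGraph.Walk.nil, rfl⟩
  | succ d ih =>
    intro h
    obtain ⟨p, hp⟩ := ih (by omega)
    exact ⟨p.concat (adj_t π ψ γ rfl), by simp [hp]⟩

lemma walk_t0 (b : Fin 8) :
    ∃ p : (WPGraph π ψ γ).Walk (t 0) (t b), p.length = (b : ℕ) := by
  obtain ⟨p, hp⟩ := exists_walk_t π ψ γ 0 (b : ℕ) (by omega)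
  refine ⟨p.copy (by norm_num) (by congr 1; ext; simp), by simp [hp]⟩

lemma dist_tt (a b : Fin 8) : (WPGraph π ψ γ).dist (t a) (t b) ≤ 7 := by
  have key : ∀ a b : Fin 8, (a : ℕ) ≤ b → (WPGraph π ψ γ).dist (t a) (t b) ≤ 7 := by
    intro a b hab
    obtain ⟨p, hp⟩ := exists_walk_t π ψ γ (a : ℕ) ((b : ℕ) - (a : ℕ)) (by omega)
    have ha : (⟨(a : ℕ), by omega⟩ : Fin 8) = a := by ext; rfl
    have hb : (⟨(a : ℕ) + ((b : ℕ) - (a : ℕ)), by omega⟩ : Fin 8) = b := by ext; simp; omega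
    have := SimpleGraph.dist_le (p.copy (by rw [ha]) (by rw [hb]))
    simp [hp] at this
    omega
  rcases le_total (a : ℕ) (b : ℕ) with h | h
  · exact key a b h
  · rw [SimpleGraph.dist_comm]; exact key b a h

lemma walk_u2 (i : Fin n) :
    ∃ p : (WPGraph π ψ γ).Walk (t 0) (u i 2), p.length ≤ 3 ∧ (i ≠ ψ → p.length ≤ 2) := by
  by_cases h : i = ψ
  · subst h
    exact ⟨.cons (adj_t_u0 π i γ i) (.cons (adj_u01 π i γ) (.cons (adj_u12 π i γ i) .nil)),
      by simp, by simp⟩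
  · exact ⟨.cons (adj_t_u1 π ψ γ h) (.cons (adj_u12 π ψ γ i) .nil), by simp, fun _ => by simp⟩

lemma walk_u (i : Fin n) (j : Fin 3) :
    ∃ p : (WPGraph π ψ γ).Walk (t 0) (u i j), p.length ≤ 3 := by
  obtain ⟨p, hp, -⟩ := walk_u2 π ψ γ i
  fin_cases j
  · exact ⟨.cons (adj_t_u0 π ψ γ i) .nil, by simp⟩
  · by_cases h : i = ψ
    · subst h
      exact ⟨.cons (adj_t_u0 π i γ i) (.cons (adj_u01 π i γ) .nil), by simp⟩
    · exact ⟨.cons (adj_t_u1 π ψ γ h) .nil, by simp⟩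
  · exact ⟨p, by omega⟩

lemma walk_v3 (k : Fin n) :
    ∃ p : (WPGraph π ψ γ).Walk (t 0) (v k 3), p.length ≤ 4 ∧ (k ≠ π ψ → p.length ≤ 3) := by
  obtain ⟨p, hp, hp'⟩ := walk_u2 π ψ γ (π.symm k)
  refine ⟨(p.concat (adj_u_v π ψ γ (π.symm k))).copy rfl (by rw [Equiv.apply_symm_apply]),
    ?_, fun hk => ?_⟩
  · simp; omega
  · have : π.symm k ≠ ψ := fun h => hk (by rw [← h, Equiv.apply_symm_apply])
    simp; have := hp' this; omega

lemma ex7 (x : WPVert n) :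
    ∃ p : (WPGraph π ψ γ).Walk (t 0) x, p.length ≤ 7 := by
  cases x with
  | t b => obtain ⟨p, hp⟩ := walk_t0 π ψ γ b; exact ⟨p, by omega⟩
  | u i j =>
    obtain ⟨p, hp⟩ := walk_u π ψ γ i j
    exact ⟨p, by omega⟩
  | v k j =>
    obtain ⟨p, hp, -⟩ := walk_v3 π ψ γ k
    fin_cases j
    · exact ⟨p.concat (adj_v30 π ψ γ k), by simp; omega⟩
    · exact ⟨(p.concat (adj_v30 π ψ γ k)).concat (adj_v01 π ψ γ k), by simp; omega⟩
    · rcases hb : wpBit γ k with hb' | hb'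
      · exact ⟨(p.concat (adj_v30 π ψ γ k)).concat (adj_v02 π ψ γ hb), by simp; omega⟩
      · exact ⟨((p.concat (adj_v30 π ψ γ k)).concat (adj_v01 π ψ γ k)).concat
          (adj_v12 π ψ γ hb), by simp; omega⟩
    · exact ⟨p, by omega⟩

lemma ex6 (hbit : wpBit γ (π ψ) = false) (x : WPVert n) (hx : ∀ a, x ≠ t a) :
    ∃ p : (WPGraph π ψ γ).Walk (t 0) x, p.length ≤ 6 := by
  cases x with
  | t b => exact absurd rfl (hx b)
  | u i j =>
    obtain ⟨p, hp⟩ := walk_u π ψ γ i j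
    exact ⟨p, by omega⟩
  | v k j =>
    obtain ⟨p, hp, hp'⟩ := walk_v3 π ψ γ k
    fin_cases j
    · exact ⟨p.concat (adj_v30 π ψ γ k), by simp; omega⟩
    · exact ⟨(p.concat (adj_v30 π ψ γ k)).concat (adj_v01 π ψ γ k), by simp; omega⟩
    · rcases hb : wpBit γ k with hb' | hb'
      · exact ⟨(p.concat (adj_v30 π ψ γ k)).concat (adj_v02 π ψ γ hb), by simp; omega⟩
      · have hk : k ≠ π ψ := fun h => by rw [h, hbit] at hb; exact absurd hb (by simp)
        have := hp' hk
        exact ⟨((p.concat (adj_v30 π ψ γ k)).concat (adj_v01 π ψ γ k)).concat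
          (adj_v12 π ψ γ hb), by simp; omega⟩
    · exact ⟨p, by omega⟩


def wf : WPVert n → ℤ
  | .t j => 7 + (j : ℤ)
  | .u i j => if i = ψ then 6 - (j : ℤ) else ![8, 8, 9] j
  | .v k j => if k = π ψ then ![2, 1, 0, 3] j else ![11, 12, 12, 10] j

lemma wf_rel (hbit : wpBit γ (π ψ) = true) {a b : WPVert n} (h : wpRel π ψ γ a b) :
    |wf π ψ a - wf π ψ b| ≤ 1 := by
  have hinj : ∀ i : Fin n, (π i = π ψ) ↔ (i = ψ) := fun i => π.injective.eq_iff
  cases a with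
  | t j =>
    cases b with
    | t k =>
      have hk : (k : ℤ) = (j : ℤ) + 1 := by exact_mod_cast (h : (k : ℕ) = (j : ℕ) + 1)
      simp [wf, hk]
    | u i l =>
      obtain ⟨rfl, hl⟩ := h
      rcases hl with rfl | ⟨rfl, hne⟩
      · by_cases hi : i = ψ <;> simp [wf, hi] <;> norm_num
      · simp [wf, hne] <;> norm_num
    | v k l => exact h.elim
  | u i j =>
    cases b with
    | t _ => exact h.elim
    | u k l =>
      obtain ⟨rfl, hcase⟩ := h
      rcases hcase with ⟨rfl, rfl, rfl⟩ | ⟨rfl, rfl⟩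
      · simp [wf]
      · by_cases hi : i = ψ <;> simp [wf, hi] <;> norm_num
    | v k l =>
      obtain ⟨rfl, rfl, rfl⟩ := h
      by_cases hi : i = ψ <;> simp [wf, hi, hinj] <;> norm_num
  | v k j =>
    cases b with
    | t _ => exact h.elim
    | u _ _ => exact h.elim
    | v k' l =>
      obtain ⟨rfl, hcase⟩ := h
      by_cases hk : k = π ψ
      · rcases hcase with ⟨rfl, rfl⟩ | ⟨rfl, rfl, hb⟩ | ⟨rfl, rfl, hb⟩ | ⟨rfl, rfl⟩
        · simp [wf, hk]
        · simp [wf, hk]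
        · rw [hk, hbit] at hb; exact absurd hb (by simp)
        · simp [wf, hk]
      · rcases hcase with ⟨rfl, rfl⟩ | ⟨rfl, rfl, hb⟩ | ⟨rfl, rfl, hb⟩ | ⟨rfl, rfl⟩ <;>
          simp [wf, hk] <;> norm_num

lemma lip (hbit : wpBit γ (π ψ) = true) {x y : WPVert n}
    (p : (WPGraph π ψ γ).Walk x y) :
    |wf π ψ x - wf π ψ y| ≤ (p.length : ℤ) := by
  induction p with
  | nil => simp
  | @cons a b c hadj p ih =>
    have h1 : |wf π ψ a - wf π ψ b| ≤ 1 := by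
      rcases (SimpleGraph.fromRel_adj _ _ _).mp hadj with ⟨-, hr | hr⟩
      · exact wf_rel π ψ γ hbit hr
      · rw [abs_sub_comm]; exact wf_rel π ψ γ hbit hr
    have h2 := abs_sub_le (wf π ψ a) (wf π ψ b) (wf π ψ c)
    simp only [SimpleGraph.Walk.length_cons]
    push_cast
    linarith

end WPAux


theorem stmt_17 {n : ℕ} (hn : 1 ≤ n) (π : Equiv.Perm (Fin n)) (ψ : Fin n) (γ : ℕ) :
    (wpBit γ (π ψ) = true →
      (WPGraph π ψ γ).dist (WPVert.v (π ψ) 2) (WPVert.t 7) = 14) ∧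
    (wpBit γ (π ψ) = false →
      ∀ u w : WPVert n, (WPGraph π ψ γ).dist u w ≤ 13) := by
  constructor
  · intro hbit
    obtain ⟨q7, hq7⟩ := WPAux.walk_t0 π ψ γ 7
    let w0 : (WPGraph π ψ γ).Walk (WPVert.t 0) (WPVert.u ψ 2) :=
      .cons (WPAux.adj_t_u0 π ψ γ ψ) (.cons (WPAux.adj_u01 π ψ γ)
        (.cons (WPAux.adj_u12 π ψ γ ψ) .nil))
    let w1 : (WPGraph π ψ γ).Walk (WPVert.t 0) (WPVert.v (π ψ) 2) :=
      (((w0.concat (WPAux.adj_u_v π ψ γ ψ)).concat (WPAux.adj_v30 π ψ γ (π ψ))).concat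
        (WPAux.adj_v01 π ψ γ (π ψ))).concat (WPAux.adj_v12 π ψ γ hbit)
    have hw1 : w1.length = 7 := by simp [w1, w0]
    let p : (WPGraph π ψ γ).Walk (WPVert.v (π ψ) 2) (WPVert.t 7) := w1.reverse.append q7
    have hp : p.length = 14 := by simp [p, hw1, hq7]
    have hle : (WPGraph π ψ γ).dist (WPVert.v (π ψ) 2) (WPVert.t 7) ≤ 14 := by
      have := SimpleGraph.dist_le p
      omega
    have hreach : (WPGraph π ψ γ).Reachable (WPVert.v (π ψ) 2) (WPVert.t 7) := ⟨p⟩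
    obtain ⟨q, hq⟩ := hreach.exists_walk_length_eq_dist
    have hlip := WPAux.lip π ψ γ hbit q
    have hv1 : WPAux.wf π ψ (WPVert.v (π ψ) 2) = 0 := by simp [WPAux.wf]
    have hv2 : WPAux.wf π ψ (WPVert.t 7) = 14 := by norm_num [WPAux.wf]
    rw [hv1, hv2] at hlip
    norm_num at hlip
    omega
  · intro hbit u w
    have main2 : ∀ x y : WPVert n, (∀ a, x ≠ WPVert.t a) →
        (WPGraph π ψ γ).dist x y ≤ 13 := by
      intro x y hx
      obtain ⟨p, hp⟩ := WPAux.ex6 π ψ γ hbit x hx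
      obtain ⟨q, hq⟩ := WPAux.ex7 π ψ γ y
      have := SimpleGraph.dist_le (p.reverse.append q)
      simp at this
      omega
    cases u with
    | t a =>
      cases w with
      | t b => have := WPAux.dist_tt π ψ γ a b; omega
      | u i j => rw [SimpleGraph.dist_comm]; exact main2 _ _ (by simp)
      | v k j => rw [SimpleGraph.dist_comm]; exact main2 _ _ (by simp)
    | u i j => exact main2 _ _ (by simp)
    | v k j => exact main2 _ _ (by simp)
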